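/- Let G be a graph, τ a threshold function, X ⊆ V(G), and suppose N_G[U] ⊆ X for a set U ⊆ V(G) such that every u ∈ U satisfies τ(u) = deg_G(u) and N_G(u) ⊆ N_G[U], and every w ∈ N_G(U) satisfies τ(w) ≤ |N_G(w) ∩ N_G[U]| whenever N_G[U] is active. If (X'_t) is the activation process on (G', τ') starting with X \ N_G[U], where G' = G − N_G[U] and τ'(u) = max{0, τ(u) − |N_G(u) ∩ N_G[U]|}, and (X_t) is the process on (G,τ) starting with X, and N_G[U] ⊆ X_t for all t, then X_t = X'_t ∪ N_G[U] for all t ≥ 0. -/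

import Mathlib

/-! Since `N = N_G[U]` is active at every step, a vertex `v ∉ N` sees exactly
`|N_G(v) ∩ N|` active neighbours in `N` plus its active neighbours in `G - N`; lowering its
threshold by `|N_G(v) ∩ N|` (clipped at `0`, which changes nothing because counts are
nonnegative) makes the two update rules agree, and induction on `t` gives the claim. -/

open Finset

/-- The non-monotone activation process on `(G, τ)` starting with `X`:
`X_t = {u : |N_G(u) ∩ X_{t-1}| ≥ τ(u)}` for `t ≥ 1`. -/
def activation {V : Type*} (G : SimpleGraph V) [Fintype V] [DecidableEq V]
    [DecidableRel G.Adj] (τ : V → ℤ) (X : Finset V) : ℕ → Finset V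
  | 0 => X
  | t + 1 => Finset.univ.filter
      (fun u => τ u ≤ ((G.neighborFinset u ∩ activation G τ X t).card : ℤ))

/-- `X` is a non-monotone target set for `(G, τ)`. -/
def IsTargetSet {V : Type*} (G : SimpleGraph V) [Fintype V] [DecidableEq V]
    [DecidableRel G.Adj] (τ : V → ℤ) (X : Finset V) : Prop :=
  ∃ t₀ : ℕ, ∀ t ≥ t₀, activation G τ X t = Finset.univ

/-- Open neighbourhood of a set of vertices: `N_G(S)`. -/
def openNbhd {V : Type*} (G : SimpleGraph V) (S : Set V) : Set V :=
  {v | v ∉ S ∧ ∃ u ∈ S, G.Adj u v}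

/-- Closed neighbourhood of a set of vertices: `N_G[S]`. -/
def closedNbhd {V : Type*} (G : SimpleGraph V) (S : Set V) : Set V :=
  S ∪ openNbhd G S

/-- Closed neighbourhood, as a finset. -/
def closedNbhdFinset {V : Type*} (G : SimpleGraph V) [Fintype V] [DecidableEq V]
    [DecidableRel G.Adj] (U : Finset V) : Finset V :=
  U ∪ Finset.univ.filter (fun v => ∃ u ∈ U, G.Adj u v)

/-- `U` is the vertex set of a connected component of the subgraph of `G` induced by `S`. -/
def IsComponentOf {V : Type*} (G : SimpleGraph V) (S U : Set V) : Prop :=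
  U ⊆ S ∧ U.Nonempty ∧ (G.induce U).Connected ∧
    ∀ u ∈ U, ∀ v ∈ S, G.Adj u v → v ∈ U

/-- The subgraph of `G` induced by `S`, as a graph on the subtype `S`. -/
def restrict {V : Type*} (G : SimpleGraph V) (S : Set V) : SimpleGraph S where
  Adj a b := G.Adj a b
  symm := ⟨fun _ _ h => G.adj_symm h⟩
  loopless := ⟨fun _ h => G.ne_of_adj h rfl⟩

instance {V : Type*} (G : SimpleGraph V) (S : Set V) [h : DecidableRel G.Adj] :
    DecidableRel (restrict G S).Adj := fun a b => h a b

theorem mem_image_val_union_iff {V : Type*} [DecidableEq V] {N : Finset V} {v : V} (hv : v ∉ N)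
    (A : Finset {v | v ∉ N}) : v ∈ A.image Subtype.val ∪ N ↔ ⟨v, hv⟩ ∈ A := by
  simp [hv]

section ReducedInstance

variable {V : Type*} [Fintype V] [DecidableEq V] (G : SimpleGraph V) [DecidableRel G.Adj]

theorem image_val_filter_union_eq {N X : Finset V} (hNX : N ⊆ X) :
    (univ.filter (fun u : {v | v ∉ N} => ↑u ∈ X)).image Subtype.val ∪ N = X := by
  ext v
  by_cases hv : v ∈ N
  · simp [hv, hNX hv]
  · rw [mem_image_val_union_iff hv]
    simp

theorem neighborFinset_inter_image_val {N : Finset V} {v : V} (hv : v ∉ N)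
    (A : Finset {v | v ∉ N}) :
    ((restrict G {v | v ∉ N}).neighborFinset ⟨v, hv⟩ ∩ A).image Subtype.val =
      G.neighborFinset v ∩ A.image Subtype.val := by
  ext w
  simp only [mem_image, mem_inter, SimpleGraph.mem_neighborFinset]
  constructor
  · rintro ⟨x, ⟨hadj, hx⟩, rfl⟩
    exact ⟨hadj, x, hx, rfl⟩
  · rintro ⟨hadj, x, hx, rfl⟩
    exact ⟨x, ⟨hadj, hx⟩, rfl⟩

theorem card_neighborFinset_inter_image_val_union {N : Finset V} {v : V} (hv : v ∉ N)
    (A : Finset {v | v ∉ N}) :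
    (G.neighborFinset v ∩ (A.image Subtype.val ∪ N)).card =
      ((restrict G {v | v ∉ N}).neighborFinset ⟨v, hv⟩ ∩ A).card +
        (G.neighborFinset v ∩ N).card := by
  have hdisj : Disjoint (G.neighborFinset v ∩ A.image Subtype.val) (G.neighborFinset v ∩ N) :=
    disjoint_left.mpr fun w hwA hwN => by
      obtain ⟨x, -, rfl⟩ := mem_image.mp (mem_inter.mp hwA).2
      exact x.2 (mem_inter.mp hwN).2
  rw [inter_union_distrib_left, card_union_of_disjoint hdisj,
    ← neighborFinset_inter_image_val G hv, card_image_of_injective _ Subtype.val_injective]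

theorem activation_succ_eq_image_union {N X : Finset V} {τ : V → ℤ}
    {X' : Finset {v | v ∉ N}} {t : ℕ}
    (ht : activation G τ X t =
      (activation (restrict G {v | v ∉ N})
        (fun u => max 0 (τ ↑u - ((G.neighborFinset ↑u ∩ N).card : ℤ))) X' t).image
          Subtype.val ∪ N)
    (hN : N ⊆ activation G τ X (t + 1)) :
    activation G τ X (t + 1) =
      (activation (restrict G {v | v ∉ N})
        (fun u => max 0 (τ ↑u - ((G.neighborFinset ↑u ∩ N).card : ℤ))) X' (t + 1)).image
          Subtype.val ∪ N := by
  ext v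
  by_cases hv : v ∈ N
  · simp [hv, hN hv]
  rw [mem_image_val_union_iff hv]
  simp only [activation, mem_filter, mem_univ, true_and]
  rw [ht, card_neighborFinset_inter_image_val_union G hv, max_le_iff]
  omega

end ReducedInstance

theorem stmt_18_general {V : Type*} [Fintype V] [DecidableEq V] (G : SimpleGraph V)
    [DecidableRel G.Adj] (τ : V → ℤ) (X : Finset V) (U : Finset V)
    (hXN : closedNbhdFinset G U ⊆ X)
    (hact : ∀ t : ℕ, closedNbhdFinset G U ⊆ activation G τ X t) :
    ∀ t : ℕ, activation G τ X t =
      (activation (restrict G {v | v ∉ closedNbhdFinset G U})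
        (fun u => max 0 (τ ↑u - ((G.neighborFinset ↑u ∩ closedNbhdFinset G U).card : ℤ)))
        (Finset.univ.filter (fun u => ↑u ∈ X)) t).image Subtype.val ∪
        closedNbhdFinset G U := by
  intro t
  induction t with
  | zero => exact (image_val_filter_union_eq hXN).symm
  | succ t ih => exact activation_succ_eq_image_union G ih (hact (t + 1))

theorem stmt_18 {V : Type*} [Fintype V] [DecidableEq V] (G : SimpleGraph V)
    [DecidableRel G.Adj] (τ : V → ℤ) (X : Finset V) (U : Finset V)
    (hU : ∀ u ∈ U, τ u = (G.degree u : ℤ) ∧ ∀ w, G.Adj u w → w ∈ closedNbhdFinset G U)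
    (hw : ∀ w ∈ openNbhd G (↑U : Set V),
      τ w ≤ ((G.neighborFinset w ∩ closedNbhdFinset G U).card : ℤ))
    (hXN : closedNbhdFinset G U ⊆ X)
    (hact : ∀ t : ℕ, closedNbhdFinset G U ⊆ activation G τ X t) :
    ∀ t : ℕ, activation G τ X t =
      (activation (restrict G {v | v ∉ closedNbhdFinset G U})
        (fun u => max 0 (τ ↑u - ((G.neighborFinset ↑u ∩ closedNbhdFinset G U).card : ℤ)))
        (Finset.univ.filter (fun u => ↑u ∈ X)) t).image Subtype.val ∪
        closedNbhdFinset G U :=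
  stmt_18_general G τ X U hXN hact
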